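/- arXiv:2006.13787 — 2 statements merged into one kernel-verified Lean document; each statement's English description precedes it below -/
import Mathlib

section
/- (Uniqueness theorem) Let S be a quasi-fundamental inverse semigroup with zero whose semilattice of idempotents is 0-disjunctive, let K be a field, and let I be the singular ideal of K₀S. Then for every ideal J of K₀S the following are equivalent: (1) J ∩ S = {0}; (2) J ∩ E(S) = {0}; (3) J ⊆ I. In particular, every ideal of K₀S not contained in I contains a non-zero idempotent of S. -/
/-!
(2) ⇒ (3): let `x ∈ J` and `e ≠ 0` with `x f ≠ 0` for all idempotents `0 ≠ f ≤ e`; among these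
pick `f` for which `x f` has the smallest support `T`. Since `x g = Σ_{t ∈ T} c_t (t g)` for
`g ≤ f`, minimality makes `t ↦ t g` injective and non-vanishing on `T`, and 0-disjunctivity then
gives `(t g)* (t g) = g`. The semigroup-theoretic core: below every idempotent `p ≠ 0` there is an
idempotent `g ≠ 0` with `g s g = 0` or `g s g = g` — otherwise `v = p s p` satisfies
`v* v = v v* = p`, conjugation by `v` fixes every idempotent below `p` (0-disjunctivity again), so
`v` centralizes `E(S)` and quasi-fundamentality puts an idempotent under `v`. For `t ≠ t₀` in `T`,
`g t₀* t g = g` would force `t₀ g = t g`; so finitely many shrinkings give `p` with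
`p t₀* t p = 0` for all `t ≠ t₀`, and then `p t₀* · x · p = c_{t₀} p ∈ J`.
-/

/-- An inverse semigroup with zero. -/
class InverseSemigroup0 (S : Type*) extends Semigroup S, Zero S, Star S where
  zero_mul : ∀ s : S, 0 * s = 0
  mul_zero : ∀ s : S, s * 0 = 0
  mul_star_mul_self : ∀ s : S, s * star s * s = s
  star_mul_self_star : ∀ s : S, star s * s * star s = star s
  star_unique : ∀ s t : S, s * t * s = s → t * s * t = t → t = star s

/-- The natural partial order on an inverse semigroup. -/
def NatLe {S : Type*} [InverseSemigroup0 S] (a b : S) : Prop := a = b * star a * a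

variable (K S : Type*) [CommRing K] [InverseSemigroup0 S]

/-- The ring congruence on the semigroup algebra identifying the zero of `S`
with the zero of the algebra. -/
noncomputable def contractedCon : RingCon (MonoidAlgebra K S) :=
  ringConGen (fun a b => a = MonoidAlgebra.single (0 : S) (1 : K) ∧ b = 0)

/-- The contracted semigroup algebra `K₀S`: the `K`-algebra with basis `S \ {0}`
and multiplication extending that of `S`, realized as the quotient of the semigroup
algebra of `S` by the span of the zero of `S`. -/
abbrev Kzero := (contractedCon K S).Quotient

/-- The quotient map onto the contracted semigroup algebra. -/
noncomputable def mk0 (a : MonoidAlgebra K S) : Kzero K S :=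
  (a : (contractedCon K S).Quotient)

/-- The canonical map `S → K₀S`. -/
noncomputable def iota (s : S) : Kzero K S := mk0 K S (MonoidAlgebra.single s 1)

/-- An element of `K₀S` is singular if for every non-zero idempotent `e` there is a
non-zero idempotent `f ≤ e` with `a f = 0`. -/
noncomputable def Singular (x : Kzero K S) : Prop :=
  ∀ e : S, IsIdempotentElem e → e ≠ 0 →
    ∃ f : S, IsIdempotentElem f ∧ f ≠ 0 ∧ NatLe f e ∧ x * iota K S f = 0

/-- `J` is a two-sided ideal of the (non-unital) ring `K₀S`. -/
def IsIdealSet (J : Set (Kzero K S)) : Prop :=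
  (0 : Kzero K S) ∈ J ∧ (∀ a ∈ J, ∀ b ∈ J, a + b ∈ J) ∧ (∀ a ∈ J, -a ∈ J) ∧
    ∀ a ∈ J, ∀ x : Kzero K S, x * a ∈ J ∧ a * x ∈ J

/-- `S` is quasi-fundamental: every non-zero element of the centralizer of `E(S)`
lies above some non-zero idempotent. -/
def QuasiFundamental (S : Type*) [InverseSemigroup0 S] : Prop :=
  ∀ s : S, s ≠ 0 → (∀ e : S, IsIdempotentElem e → s * e = e * s) →
    ∃ e : S, e ≠ 0 ∧ IsIdempotentElem e ∧ NatLe e s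

/-- The semilattice of idempotents of `S` is 0-disjunctive. -/
def ZeroDisjunctive (S : Type*) [InverseSemigroup0 S] : Prop :=
  ∀ e f : S, IsIdempotentElem e → IsIdempotentElem f → f ≠ 0 → NatLe f e → f ≠ e →
    ∃ g : S, g ≠ 0 ∧ IsIdempotentElem g ∧ NatLe g e ∧ f * g = 0

namespace InverseSemigroup0

variable {S}

theorem star_star_eq (s : S) : star (star s) = s :=
  (star_unique _ _ (star_mul_self_star s) (mul_star_mul_self s)).symm

theorem star_eq_self {e : S} (he : IsIdempotentElem e) : star e = e :=
  (star_unique e e (by rw [he.eq, he.eq]) (by rw [he.eq, he.eq])).symm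

theorem isIdempotentElem_mul_star_self (s : S) : IsIdempotentElem (s * star s) := by
  rw [IsIdempotentElem, ← mul_assoc, mul_star_mul_self]

theorem isIdempotentElem_star_mul_self (s : S) : IsIdempotentElem (star s * s) := by
  rw [IsIdempotentElem, ← mul_assoc, star_mul_self_star]

theorem isIdempotentElem_mul {e f : S} (he : IsIdempotentElem e) (hf : IsIdempotentElem f) :
    IsIdempotentElem (e * f) := by
  have hfxe : f * star (e * f) * e = star (e * f) := by
    refine star_unique (e * f) _ ?_ ?_
    · calc e * f * (f * star (e * f) * e) * (e * f)
          = e * (f * f) * star (e * f) * (e * e) * f := by simp only [mul_assoc]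
        _ = e * f * star (e * f) * (e * f) := by rw [he.eq, hf.eq]; simp only [mul_assoc]
        _ = e * f := mul_star_mul_self _
    · calc f * star (e * f) * e * (e * f) * (f * star (e * f) * e)
          = f * (star (e * f) * (e * e) * (f * f) * star (e * f)) * e := by
            simp only [mul_assoc]
        _ = f * (star (e * f) * (e * f) * star (e * f)) * e := by
            rw [he.eq, hf.eq]; simp only [mul_assoc]
        _ = f * star (e * f) * e := by rw [star_mul_self_star]
  have hx : IsIdempotentElem (star (e * f)) := by
    calc star (e * f) * star (e * f) = f * star (e * f) * e * (f * star (e * f) * e) := by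
          rw [hfxe]
      _ = f * (star (e * f) * (e * f) * star (e * f)) * e := by simp only [mul_assoc]
      _ = star (e * f) := by rw [star_mul_self_star, hfxe]
  rwa [← star_star_eq (e * f), star_eq_self hx]

theorem commute_of_isIdempotentElem {e f : S} (he : IsIdempotentElem e)
    (hf : IsIdempotentElem f) : Commute e f := by
  have hfe : f * e = star (e * f) := by
    refine star_unique (e * f) _ ?_ ?_
    · calc e * f * (f * e) * (e * f) = e * (f * f) * (e * e) * f := by simp only [mul_assoc]
        _ = e * f * (e * f) := by rw [he.eq, hf.eq]; simp only [mul_assoc]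
        _ = e * f := (isIdempotentElem_mul he hf).eq
    · calc f * e * (e * f) * (f * e) = f * (e * e) * (f * f) * e := by simp only [mul_assoc]
        _ = f * e * (f * e) := by rw [he.eq, hf.eq]; simp only [mul_assoc]
        _ = f * e := (isIdempotentElem_mul hf he).eq
  rw [Commute, SemiconjBy, hfe, star_eq_self (isIdempotentElem_mul he hf)]

theorem star_mul_rev (a b : S) : star (a * b) = star b * star a := by
  have hc := commute_of_isIdempotentElem (isIdempotentElem_mul_star_self b)
    (isIdempotentElem_star_mul_self a)
  refine (star_unique _ _ ?_ ?_).symm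
  · calc a * b * (star b * star a) * (a * b) = a * (b * star b * (star a * a)) * b := by
          simp only [mul_assoc]
      _ = (a * star a * a) * (b * star b * b) := by rw [hc.eq]; simp only [mul_assoc]
      _ = a * b := by rw [mul_star_mul_self, mul_star_mul_self]
  · calc star b * star a * (a * b) * (star b * star a)
          = star b * (star a * a * (b * star b)) * star a := by simp only [mul_assoc]
      _ = (star b * b * star b) * (star a * a * star a) := by
          rw [← hc.eq]; simp only [mul_assoc]
      _ = star b * star a := by rw [star_mul_self_star, star_mul_self_star]

instance : StarMul S where
  star_involutive := star_star_eq
  star_mul := star_mul_rev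

theorem eq_zero_of_mul_star_self_eq_zero {s : S} (h : s * star s = 0) : s = 0 := by
  rw [← mul_star_mul_self s, h, zero_mul]

theorem eq_zero_of_star_mul_self_eq_zero {s : S} (h : star s * s = 0) : s = 0 := by
  rw [← mul_star_mul_self s, mul_assoc, h, mul_zero]

theorem natLe_iff {e f : S} (hf : IsIdempotentElem f) : NatLe f e ↔ e * f = f := by
  rw [NatLe, star_eq_self hf, mul_assoc, hf.eq, eq_comm]

theorem natLe_refl {e : S} (he : IsIdempotentElem e) : NatLe e e :=
  (natLe_iff he).2 he.eq

theorem natLe_trans {e f g : S} (hg : IsIdempotentElem g) (hf : IsIdempotentElem f)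
    (hgf : NatLe g f) (hfe : NatLe f e) : NatLe g e := by
  rw [natLe_iff hg] at hgf ⊢
  rw [natLe_iff hf] at hfe
  rw [← hgf, ← mul_assoc, hfe]

theorem mul_eq_of_natLe {e f : S} (he : IsIdempotentElem e) (hf : IsIdempotentElem f)
    (h : NatLe f e) : f * e = f := by
  rw [(commute_of_isIdempotentElem hf he).eq, (natLe_iff hf).1 h]

theorem eq_of_star_mul_eq {u w : S} (h : star u * u = star w * w)
    (huw : star u * w = star u * u) : u = w := by
  have hu : u = u * star u * w := by rw [mul_assoc, huw, ← mul_assoc, mul_star_mul_self]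
  have hwu : star w * u = star w * w := by
    rw [← star_star u, ← star_mul, huw, star_mul, star_star, h]
  have hw : w = w * star w * u := by rw [mul_assoc, hwu, ← mul_assoc, mul_star_mul_self]
  calc u = u * star u * (w * star w * u) := by rw [← hw]; exact hu
    _ = w * star w * (u * star u * u) := by
      rw [← mul_assoc, (commute_of_isIdempotentElem (isIdempotentElem_mul_star_self u)
        (isIdempotentElem_mul_star_self w)).eq, mul_assoc]
    _ = w := by rw [mul_star_mul_self, ← hw]

theorem mul_eq_mul_of_sandwich_eq_self {u w g : S} (hg : IsIdempotentElem g)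
    (hu : star (u * g) * (u * g) = g) (hw : star (w * g) * (w * g) = g)
    (h : g * (star u * w) * g = g) : u * g = w * g := by
  refine eq_of_star_mul_eq (hu.trans hw.symm) ?_
  calc star (u * g) * (w * g) = g * (star u * w) * g := by
        rw [star_mul, star_eq_self hg]; simp only [mul_assoc]
    _ = star (u * g) * (u * g) := by rw [h, hu]

theorem isIdempotentElem_conj (v : S) {g : S} (hg : IsIdempotentElem g) :
    IsIdempotentElem (v * g * star v) := by
  have hc := commute_of_isIdempotentElem hg (isIdempotentElem_star_mul_self v)
  calc v * g * star v * (v * g * star v) = v * (g * (star v * v)) * g * star v := by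
        simp only [mul_assoc]
    _ = v * star v * v * (g * g) * star v := by rw [hc.eq]; simp only [mul_assoc]
    _ = v * g * star v := by rw [mul_star_mul_self, hg.eq]

theorem conj_mul_conj (v : S) {g q : S} (hg : IsIdempotentElem g) :
    v * g * star v * (v * q * star v) = v * (g * q) * star v := by
  have hc := commute_of_isIdempotentElem hg (isIdempotentElem_star_mul_self v)
  calc v * g * star v * (v * q * star v) = v * (g * (star v * v)) * q * star v := by
        simp only [mul_assoc]
    _ = v * star v * v * (g * q) * star v := by rw [hc.eq]; simp only [mul_assoc]
    _ = v * (g * q) * star v := by rw [mul_star_mul_self]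

theorem star_mul_self_eq_of_forall_mul_ne_zero (hdisj : ZeroDisjunctive S) {t g : S}
    (hg : IsIdempotentElem g) (hg0 : g ≠ 0)
    (ht : ∀ h, IsIdempotentElem h → h ≠ 0 → NatLe h g → t * h ≠ 0) :
    star (t * g) * (t * g) = g := by
  have hk := isIdempotentElem_star_mul_self (t * g)
  have hkg : NatLe (star (t * g) * (t * g)) g := by
    rw [natLe_iff hk, star_mul, star_eq_self hg]
    simp only [← mul_assoc, hg.eq]
  have hk0 : star (t * g) * (t * g) ≠ 0 := fun h0 =>
    ht g hg hg0 (natLe_refl hg) (eq_zero_of_star_mul_self_eq_zero h0)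
  by_contra hne
  obtain ⟨h, hh0, hh, hhg, hkh⟩ := hdisj g _ hg hk hk0 hkg hne
  apply ht h hh hh0 hhg
  calc t * h = t * g * star (t * g) * (t * g) * h := by
        rw [mul_star_mul_self, mul_assoc t, (natLe_iff hh).1 hhg]
    _ = t * g * (star (t * g) * (t * g) * h) := by simp only [mul_assoc]
    _ = 0 := by rw [hkh, mul_zero]

theorem sandwich_eq_zero_of_natLe {g q s : S} (hg : IsIdempotentElem g) (hq : IsIdempotentElem q)
    (hqg : NatLe q g) (h : g * s * g = 0) : q * s * q = 0 := by
  calc q * s * q = q * g * s * (g * q) := by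
        rw [mul_eq_of_natLe hg hq hqg, (natLe_iff hq).1 hqg]
    _ = q * (g * s * g) * q := by simp only [mul_assoc]
    _ = 0 := by rw [h, mul_zero, zero_mul]

theorem mul_conj_eq_self (hdisj : ZeroDisjunctive S) {p v : S}
    (h : ∀ g, IsIdempotentElem g → g ≠ 0 → NatLe g p → g * (v * g * star v) ≠ 0)
    {g : S} (hg : IsIdempotentElem g) (hgp : NatLe g p) : g * (v * g * star v) = g := by
  by_cases hg0 : g = 0
  · rw [hg0, zero_mul]
  have hf := isIdempotentElem_mul hg (isIdempotentElem_conj v hg)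
  have hfg : NatLe (g * (v * g * star v)) g := by rw [natLe_iff hf, ← mul_assoc, hg.eq]
  by_contra hne
  obtain ⟨q, hq0, hq, hqg, hfq⟩ := hdisj g _ hg hf (h g hg hg0 hgp) hfg hne
  apply h q hq hq0 (natLe_trans hq hg hqg hgp)
  calc q * (v * q * star v) = q * g * (v * g * star v * (v * q * star v)) := by
        rw [conj_mul_conj v hg, (natLe_iff hq).1 hqg, mul_eq_of_natLe hg hq hqg]
    _ = g * (v * g * star v) * q * (v * q * star v) := by
        rw [← (commute_of_isIdempotentElem hq hf).eq]; simp only [mul_assoc]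
    _ = 0 := by rw [hfq, zero_mul]

theorem commute_of_forall_sandwich_ne_zero (hdisj : ZeroDisjunctive S) {p v : S}
    (hp : IsIdempotentElem p) (hvv : star v * v = p) (hvv' : v * star v = p)
    (h : ∀ g, IsIdempotentElem g → g ≠ 0 → NatLe g p → g * v * g ≠ 0)
    {g : S} (hg : IsIdempotentElem g) (hgp : NatLe g p) : Commute v g := by
  have hφ : g * (v * g * star v) = g := by
    refine mul_conj_eq_self hdisj (fun q hq hq0 hqp hz => h q hq hq0 hqp ?_) hg hgp
    apply eq_zero_of_mul_star_self_eq_zero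
    calc q * v * q * star (q * v * q) = q * v * (q * q) * star v * q := by
          rw [star_mul, star_mul, star_eq_self hq]; simp only [mul_assoc]
      _ = q * (v * q * star v) * q := by rw [hq.eq]; simp only [mul_assoc]
      _ = 0 := by rw [hz, zero_mul]
  have hθ : g * (star v * g * v) = g := by
    have h' : ∀ q, IsIdempotentElem q → q ≠ 0 → NatLe q p →
        q * (star v * q * star (star v)) ≠ 0 := by
      intro q hq hq0 hqp hz
      rw [star_star] at hz
      apply h q hq hq0 hqp (eq_zero_of_star_mul_self_eq_zero _)
      calc star (q * v * q) * (q * v * q) = q * star v * (q * q) * v * q := by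
            rw [star_mul, star_mul, star_eq_self hq]; simp only [mul_assoc]
        _ = q * (star v * q * v) * q := by rw [hq.eq]; simp only [mul_assoc]
        _ = 0 := by rw [hz, zero_mul]
    simpa only [star_star] using mul_conj_eq_self hdisj h' hg hgp
  have hφθ : v * (star v * g * v) * star v = g := by
    calc v * (star v * g * v) * star v = v * star v * g * (v * star v) := by
          simp only [mul_assoc]
      _ = g := by rw [hvv', (natLe_iff hg).1 hgp, mul_eq_of_natLe hp hg hgp]
  have hφg : v * g * star v = g := by
    calc v * g * star v = v * (g * (star v * g * v)) * star v := by rw [hθ]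
      _ = v * g * star v * (v * (star v * g * v) * star v) := (conj_mul_conj v hg).symm
      _ = g * (v * g * star v) := by
          rw [hφθ, (commute_of_isIdempotentElem (isIdempotentElem_conj v hg) hg).eq]
      _ = g := hφ
  show v * g = g * v
  calc v * g = v * g * (star v * v) := by rw [hvv, mul_assoc, mul_eq_of_natLe hp hg hgp]
    _ = g * v := by rw [← mul_assoc, hφg]

theorem exists_sandwich_eq_zero_or_eq_self (hqf : QuasiFundamental S)
    (hdisj : ZeroDisjunctive S) (s : S) {p : S} (hp : IsIdempotentElem p) (hp0 : p ≠ 0) :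
    ∃ g, IsIdempotentElem g ∧ g ≠ 0 ∧ NatLe g p ∧ (g * s * g = 0 ∨ g * s * g = g) := by
  by_contra! H
  have hsand : ∀ g, IsIdempotentElem g → NatLe g p → g * (p * s * p) * g = g * s * g := by
    intro g hg hgp
    calc g * (p * s * p) * g = g * p * s * (p * g) := by simp only [mul_assoc]
      _ = g * s * g := by rw [mul_eq_of_natLe hp hg hgp, (natLe_iff hg).1 hgp]
  obtain ⟨v, hv⟩ : ∃ v, v = p * s * p := ⟨_, rfl⟩
  have hvg : ∀ g, IsIdempotentElem g → g ≠ 0 → NatLe g p → g * v * g ≠ 0 :=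
    fun g hg hg0 hgp => hv ▸ hsand g hg hgp ▸ (H g hg hg0 hgp).1
  have hvp : v * p = v := by rw [hv, mul_assoc, hp.eq]
  have hpv : p * v = v := by rw [hv, ← mul_assoc, ← mul_assoc, hp.eq]
  have hvv : star v * v = p := by
    have := star_mul_self_eq_of_forall_mul_ne_zero hdisj hp hp0 (t := v)
      fun g hg hg0 hgp hz => hvg g hg hg0 hgp (by rw [mul_assoc, hz, mul_zero])
    rwa [hvp] at this
  have hvv' : v * star v = p := by
    have := star_mul_self_eq_of_forall_mul_ne_zero hdisj hp hp0 (t := star v)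
      fun g hg hg0 hgp hz => hvg g hg hg0 hgp <| eq_zero_of_mul_star_self_eq_zero <| by
        rw [star_mul, star_mul, star_eq_self hg, mul_assoc _ g, ← mul_assoc g g, hg.eq, hz,
          mul_zero, mul_zero]
    rwa [← star_eq_self hp, ← star_mul, hpv, star_star, star_eq_self hp] at this
  have hcomm : ∀ h, IsIdempotentElem h → Commute v h := by
    intro h hh
    have hph := isIdempotentElem_mul hp hh
    have hphp : NatLe (p * h) p := (natLe_iff hph).2 (by rw [← mul_assoc, hp.eq])
    calc v * h = v * (p * h) := by rw [← mul_assoc, hvp]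
      _ = p * h * v := (commute_of_forall_sandwich_ne_zero hdisj hp hvv hvv' hvg hph hphp).eq
      _ = h * v := by rw [(commute_of_isIdempotentElem hp hh).eq, mul_assoc, hpv]
  have hv0 : v ≠ 0 := fun h0 => hvg p hp hp0 (natLe_refl hp) (by rw [h0, mul_zero, zero_mul])
  obtain ⟨e, he0, he, hev⟩ := hqf v hv0 fun h hh => (hcomm h hh).eq
  have hve : v * e = e := by rw [NatLe, star_eq_self he, mul_assoc, he.eq] at hev; exact hev.symm
  have hep : NatLe e p := (natLe_iff he).2 (by rw [← hve, ← mul_assoc, hpv])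
  apply (H e he he0 hep).2
  rw [← hsand e he hep, ← hv, ← (hcomm e he).eq, hve, he.eq]

theorem exists_forall_sandwich_eq_zero (hqf : QuasiFundamental S) (hdisj : ZeroDisjunctive S)
    {p : S} (hp : IsIdempotentElem p) (hp0 : p ≠ 0) (V : Finset S)
    (hV : ∀ s ∈ V, ∀ g, IsIdempotentElem g → g ≠ 0 → NatLe g p → g * s * g ≠ g) :
    ∃ g, IsIdempotentElem g ∧ g ≠ 0 ∧ NatLe g p ∧ ∀ s ∈ V, g * s * g = 0 := by
  classical
  induction V using Finset.induction_on with
  | empty => exact ⟨p, hp, hp0, natLe_refl hp, by simp⟩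
  | insert s V _ ih =>
    obtain ⟨g, hg, hg0, hgp, hgV⟩ := ih fun t ht => hV t (Finset.mem_insert_of_mem ht)
    obtain ⟨q, hq, hq0, hqg, hqs⟩ := exists_sandwich_eq_zero_or_eq_self hqf hdisj s hg hg0
    have hqp := natLe_trans hq hg hqg hgp
    refine ⟨q, hq, hq0, hqp, Finset.forall_mem_insert _ _ _ |>.2 ⟨?_, ?_⟩⟩
    · exact hqs.resolve_right (hV s (Finset.mem_insert_self s V) q hq hq0 hqp)
    · exact fun t ht => sandwich_eq_zero_of_natLe hg hq hqg (hgV t ht)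

end InverseSemigroup0

open InverseSemigroup0 hiding zero_mul mul_zero

namespace Kzero

variable {K S}

theorem erase_zero_single_zero_mul (r : K) (a : MonoidAlgebra K S) :
    (MonoidAlgebra.single (0 : S) r * a).coeff.erase 0 = 0 := by
  ext m
  by_cases hm : m = 0
  · rw [hm, Finsupp.erase_same, Finsupp.zero_apply]
  · rw [Finsupp.erase_ne hm, MonoidAlgebra.coeff_single_mul_of_forall_mul_ne _ _
      fun d => by rw [InverseSemigroup0.zero_mul]; exact Ne.symm hm, Finsupp.zero_apply]

theorem erase_zero_mul_single_zero (a : MonoidAlgebra K S) (r : K) :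
    (a * MonoidAlgebra.single (0 : S) r).coeff.erase 0 = 0 := by
  ext m
  by_cases hm : m = 0
  · rw [hm, Finsupp.erase_same, Finsupp.zero_apply]
  · rw [Finsupp.erase_ne hm, MonoidAlgebra.coeff_mul_single_of_forall_mul_ne _ _
      fun d => by rw [InverseSemigroup0.mul_zero]; exact Ne.symm hm, Finsupp.zero_apply]

theorem erase_zero_mul (a b : MonoidAlgebra K S) :
    (a * b).coeff.erase 0 =
      (MonoidAlgebra.ofCoeff (a.coeff.erase 0) * .ofCoeff (b.coeff.erase 0)).coeff.erase 0 := by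
  conv_lhs => rw [← MonoidAlgebra.single_add_erase 0 a, ← MonoidAlgebra.single_add_erase 0 b]
  simp only [add_mul, mul_add, MonoidAlgebra.coeff_add, Finsupp.erase_add,
    erase_zero_single_zero_mul, erase_zero_mul_single_zero, zero_add]
  rfl

noncomputable def offZeroCon : RingCon (MonoidAlgebra K S) where
  r a b := a.coeff.erase 0 = b.coeff.erase 0
  iseqv := ⟨fun _ => rfl, Eq.symm, Eq.trans⟩
  add' h h' := by simp only [MonoidAlgebra.coeff_add, Finsupp.erase_add, h, h']
  mul' h h' := by rw [erase_zero_mul, h, h', ← erase_zero_mul]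

theorem contractedCon_le_offZeroCon : contractedCon K S ≤ offZeroCon := by
  refine RingCon.ringConGen_le.2 ?_
  rintro a b ⟨rfl, rfl⟩
  show (Finsupp.single (0 : S) (1 : K)).erase 0 = (0 : S →₀ K).erase 0
  rw [Finsupp.erase_single, Finsupp.erase_zero]

noncomputable def coeff (x : Kzero K S) : S →₀ K :=
  Quotient.liftOn x (fun a => a.coeff.erase 0) fun _ _ h => contractedCon_le_offZeroCon h

noncomputable def single0 (s : S) (r : K) : Kzero K S := mk0 K S (MonoidAlgebra.single s r)

theorem iota_eq_single0 (s : S) : iota K S s = single0 s 1 := rfl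

theorem single0_mul_single0 (s t : S) (r r' : K) :
    single0 s r * single0 t r' = single0 (s * t) (r * r') := by
  rw [single0, single0, single0, ← MonoidAlgebra.single_mul_single]
  rfl

theorem iota_mul_iota (s t : S) : iota K S s * iota K S t = iota K S (s * t) := by
  rw [iota_eq_single0, iota_eq_single0, single0_mul_single0, mul_one]
  rfl

theorem iota_zero : iota K S (0 : S) = 0 :=
  (RingCon.eq _).2 (RingConGen.Rel.of _ _ ⟨rfl, rfl⟩)

theorem single0_zero_left (r : K) : single0 (0 : S) r = 0 := by
  calc single0 (0 : S) r = single0 0 r * iota K S 0 := by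
        rw [iota_eq_single0, single0_mul_single0, InverseSemigroup0.mul_zero, mul_one]
    _ = 0 := by rw [iota_zero, mul_zero]

theorem mk0_ofCoeff_coeff (x : Kzero K S) : mk0 K S (.ofCoeff (coeff x)) = x := by
  induction x using Quotient.inductionOn with
  | h a =>
    show mk0 K S (a.erase 0) = mk0 K S a
    conv_rhs => rw [← MonoidAlgebra.single_add_erase 0 a]
    show _ = single0 0 (a.coeff 0) + mk0 K S (a.erase 0)
    rw [single0_zero_left, zero_add]

theorem sum_single0 {ι : Type*} (T : Finset ι) (φ : ι → S) (c : ι → K) :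
    ∑ i ∈ T, single0 (φ i) (c i) = mk0 K S (∑ i ∈ T, MonoidAlgebra.single (φ i) (c i)) :=
  (map_sum (AddMonoidHom.mk' (mk0 K S) fun _ _ => rfl) _ T).symm

theorem sum_single0_coeff (x : Kzero K S) :
    ∑ t ∈ (coeff x).support, single0 t (coeff x t) = x := by
  rw [sum_single0]
  conv_rhs => rw [← mk0_ofCoeff_coeff x, ← MonoidAlgebra.sum_coeff_single (.ofCoeff (coeff x))]
  rfl

theorem coeff_support_nonempty {x : Kzero K S} (hx : x ≠ 0) : (coeff x).support.Nonempty := by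
  rw [Finset.nonempty_iff_ne_empty, Ne, Finsupp.support_eq_empty]
  intro h
  rw [← mk0_ofCoeff_coeff x, h] at hx
  exact hx rfl

theorem support_coeff_sum_single0_subset [DecidableEq S] {ι : Type*} (T : Finset ι) (φ : ι → S)
    (c : ι → K) : (coeff (∑ i ∈ T, single0 (φ i) (c i))).support ⊆ (T.image φ).erase 0 := by
  rw [sum_single0]
  show (Finsupp.erase 0 (∑ i ∈ T, MonoidAlgebra.single (φ i) (c i)).coeff).support ⊆ _
  rw [Finsupp.support_erase, MonoidAlgebra.coeff_sum]
  refine Finset.erase_subset_erase _ (Finsupp.support_finsetSum.trans ?_)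
  intro s hs
  obtain ⟨i, hi, hs⟩ := Finset.mem_biUnion.1 hs
  rw [Finset.mem_singleton.1 (Finsupp.support_single_subset hs)]
  exact Finset.mem_image_of_mem φ hi

theorem injOn_of_card_le_card_support {ι : Type*} {T : Finset ι} {φ : ι → S} {c : ι → K}
    (h : T.card ≤ (coeff (∑ i ∈ T, single0 (φ i) (c i))).support.card) :
    Set.InjOn φ T ∧ ∀ i ∈ T, φ i ≠ 0 := by
  classical
  have h₁ := Finset.card_le_card (support_coeff_sum_single0_subset T φ c)
  have h₂ := Finset.card_image_le (s := T) (f := φ)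
  refine ⟨Finset.card_image_iff.1 (le_antisymm h₂ (h.trans (h₁.trans Finset.card_erase_le))), ?_⟩
  intro i hi h0
  have hmem : 0 ∈ T.image φ := h0 ▸ Finset.mem_image_of_mem φ hi
  have := Finset.card_erase_of_mem hmem
  have := Finset.card_pos.2 ⟨_, hmem⟩
  omega

theorem iota_ne_zero [Nontrivial K] {s : S} (hs : s ≠ 0) : iota K S s ≠ 0 := by
  intro h
  have h' : coeff (iota K S s) s = coeff (0 : Kzero K S) s := by rw [h]
  change (Finsupp.single s (1 : K)).erase 0 s = (0 : S →₀ K).erase 0 s at h'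
  rw [Finsupp.erase_ne hs, Finsupp.erase_zero, Finsupp.single_eq_same] at h'
  exact one_ne_zero h'

theorem eq_zero_of_singular_iota [Nontrivial K] {s : S} (h : Singular K S (iota K S s)) :
    s = 0 := by
  by_contra hs
  obtain ⟨f, hf, hf0, hfs, hsf⟩ := h (star s * s) (isIdempotentElem_star_mul_self s)
    fun h0 => hs (eq_zero_of_star_mul_self_eq_zero h0)
  rw [iota_mul_iota] at hsf
  have hsf' : s * f = 0 := by_contra fun h' => iota_ne_zero h' hsf
  apply hf0
  rw [← (natLe_iff hf).1 hfs, mul_assoc, hsf', InverseSemigroup0.mul_zero]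

theorem mul_iota_eq_sum_of_natLe (x : Kzero K S) {f g : S} (hg : IsIdempotentElem g)
    (hgf : NatLe g f) :
    x * iota K S g = ∑ t ∈ (coeff (x * iota K S f)).support,
      single0 (t * g) (coeff (x * iota K S f) t) := by
  calc x * iota K S g = x * iota K S f * iota K S g := by
        rw [mul_assoc, iota_mul_iota, (natLe_iff hg).1 hgf]
    _ = (∑ t ∈ (coeff (x * iota K S f)).support, single0 t (coeff (x * iota K S f) t)) *
          iota K S g := by rw [sum_single0_coeff]
    _ = _ := by simp only [Finset.sum_mul, iota_eq_single0, single0_mul_single0, mul_one]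

theorem exists_forall_injOn_mul (x : Kzero K S) {e : S} (he : IsIdempotentElem e)
    (he0 : e ≠ 0) :
    ∃ f, IsIdempotentElem f ∧ f ≠ 0 ∧ NatLe f e ∧
      ∀ g, IsIdempotentElem g → g ≠ 0 → NatLe g f →
        Set.InjOn (· * g) (coeff (x * iota K S f)).support ∧
          ∀ t ∈ (coeff (x * iota K S f)).support, t * g ≠ 0 := by
  obtain ⟨f, ⟨hf, hf0, hfe⟩, hmin⟩ :=
    (measure fun f => (coeff (x * iota K S f)).support.card).wf.has_min
      {f | IsIdempotentElem f ∧ f ≠ 0 ∧ NatLe f e} ⟨e, he, he0, natLe_refl he⟩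
  refine ⟨f, hf, hf0, hfe, fun g hg hg0 hgf =>
    injOn_of_card_le_card_support (c := coeff (x * iota K S f)) ?_⟩
  rw [← mul_iota_eq_sum_of_natLe x hg hgf]
  exact not_lt.1 (hmin g ⟨hg, hg0, natLe_trans hg hf hgf hfe⟩)

theorem iota_mul_mul_iota_eq_single0 (x : Kzero K S) {f p t₀ : S} (hp : IsIdempotentElem p)
    (hpf : NatLe p f) (ht₀ : t₀ ∈ (coeff (x * iota K S f)).support)
    (hpt₀ : star (t₀ * p) * (t₀ * p) = p)
    (hpt : ∀ t ∈ (coeff (x * iota K S f)).support, t ≠ t₀ → p * (star t₀ * t) * p = 0) :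
    iota K S (p * star t₀) * (x * iota K S p) = single0 p (coeff (x * iota K S f) t₀) := by
  rw [mul_iota_eq_sum_of_natLe x hp hpf, Finset.mul_sum, Finset.sum_eq_single t₀]
  · rw [star_mul, star_eq_self hp] at hpt₀
    rw [iota_eq_single0, single0_mul_single0, one_mul, hpt₀]
  · intro t ht htt₀
    rw [iota_eq_single0, single0_mul_single0, one_mul, mul_assoc, ← mul_assoc (star t₀),
      ← mul_assoc, hpt t ht htt₀, single0_zero_left]
  · exact fun h => absurd ht₀ h

end Kzero

open Kzero

theorem iota_mem_of_single0_mem {K S : Type*} [Field K] [InverseSemigroup0 S]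
    {J : Set (Kzero K S)} (hJ : IsIdealSet K S J) {p : S} (hp : IsIdempotentElem p) {r : K}
    (hr : r ≠ 0) (h : single0 p r ∈ J) : iota K S p ∈ J := by
  rw [iota_eq_single0, ← hp.eq, ← mul_inv_cancel₀ hr, ← single0_mul_single0]
  exact (hJ.2.2.2 _ h _).2

theorem exists_iota_mem_of_not_singular {K S : Type*} [Field K] [InverseSemigroup0 S]
    (hqf : QuasiFundamental S) (hdisj : ZeroDisjunctive S) {J : Set (Kzero K S)}
    (hJ : IsIdealSet K S J) {x : Kzero K S} (hx : x ∈ J) (hxs : ¬Singular K S x) :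
    ∃ p : S, IsIdempotentElem p ∧ p ≠ 0 ∧ iota K S p ∈ J := by
  classical
  simp only [Singular, not_forall, not_exists, not_and] at hxs
  obtain ⟨e, he, he0, hxe⟩ := hxs
  obtain ⟨f, hf, hf0, hfe, hT⟩ := exists_forall_injOn_mul x he he0
  obtain ⟨c, hc⟩ : ∃ c, c = coeff (x * iota K S f) := ⟨_, rfl⟩
  rw [← hc] at hT
  have hstar : ∀ t ∈ c.support, ∀ g, IsIdempotentElem g → g ≠ 0 → NatLe g f →
      star (t * g) * (t * g) = g := fun t ht g hg hg0 hgf =>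
    star_mul_self_eq_of_forall_mul_ne_zero hdisj hg hg0 fun h hh hh0 hhg =>
      (hT h hh hh0 (natLe_trans hh hg hhg hgf)).2 t ht
  obtain ⟨t₀, ht₀⟩ := hc ▸ coeff_support_nonempty (hxe f hf hf0 hfe)
  obtain ⟨p, hp, hp0, hpf, hpT⟩ := exists_forall_sandwich_eq_zero hqf hdisj hf hf0
    ((c.support.erase t₀).image (star t₀ * ·)) <| by
      simp only [Finset.forall_mem_image, Finset.mem_erase]
      rintro t ⟨htt₀, ht⟩ g hg hg0 hgf hsg
      exact htt₀ ((hT g hg hg0 hgf).1 ht₀ ht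
        (mul_eq_mul_of_sandwich_eq_self hg (hstar t₀ ht₀ g hg hg0 hgf) (hstar t ht g hg hg0 hgf)
          hsg)).symm
  refine ⟨p, hp, hp0, iota_mem_of_single0_mem hJ hp (Finsupp.mem_support_iff.1 ht₀) ?_⟩
  rw [hc, ← iota_mul_mul_iota_eq_single0 x hp hpf (hc ▸ ht₀) (hstar t₀ ht₀ p hp hp0 hpf)
    fun t ht htt₀ => hpT _ (Finset.mem_image_of_mem _ (Finset.mem_erase.2 ⟨htt₀, hc ▸ ht⟩))]
  exact (hJ.2.2.2 _ (hJ.2.2.2 x hx _).2 _).1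

/-- Uniqueness theorem: for a quasi-fundamental inverse semigroup with zero whose
semilattice of idempotents is 0-disjunctive, a field `K`, and an ideal `J` of `K₀S`,
the following are equivalent: (1) `J ∩ S = {0}`; (2) `J ∩ E(S) = {0}`;
(3) `J` is contained in the singular ideal. -/
theorem stmt12 {K S : Type*} [Field K] [InverseSemigroup0 S]
    (hqf : QuasiFundamental S) (hdisj : ZeroDisjunctive S)
    (J : Set (Kzero K S)) (hJ : IsIdealSet K S J) :
    List.TFAE
      [∀ s : S, iota K S s ∈ J → s = 0,
       ∀ e : S, IsIdempotentElem e → iota K S e ∈ J → e = 0,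
       J ⊆ {x : Kzero K S | Singular K S x}] := by
  tfae_have 1 → 2 := fun h e _ => h e
  tfae_have 2 → 3 := fun h x hx => by_contra fun hxs => by
    obtain ⟨p, hp, hp0, hpJ⟩ := exists_iota_mem_of_not_singular hqf hdisj hJ hx hxs
    exact hp0 (h p hp hpJ)
  tfae_have 3 → 1 := fun h s hs => eq_zero_of_singular_iota (h hs)
  tfae_finish
end

section
/- Let G be a group with a faithful self-similar action on X* where X is an infinite alphabet, and let S be the associated inverse hull (with non-zero elements u g v*, u, v ∈ X*, g ∈ G). Then the universal groupoid of S is effective if and only if the only element g ∈ G that strongly fixes a cofinite subset of the letters of X is the identity. -/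
/-- A self-similar action of a group `G` on the free monoid on the alphabet `X`:
an action on letters together with restrictions `g|_x`, satisfying the self-similarity
axioms. -/
structure SelfSimilarAction (G X : Type*) [Group G] where
  act : G → X → X
  res : G → X → G
  act_one : ∀ x, act 1 x = x
  act_mul : ∀ g h x, act (g * h) x = act g (act h x)
  res_one : ∀ x, res 1 x = 1
  res_mul : ∀ g h x, res (g * h) x = res g (act h x) * res h x

namespace SelfSimilarAction

variable {G X : Type*} [Group G] (σ : SelfSimilarAction G X)

/-- The induced action of `g ∈ G` on finite words. -/
def actW (g : G) : List X → List X
  | [] => []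
  | x :: u => σ.act g x :: actW (σ.res g x) u

/-- The restriction `g|_w` of `g ∈ G` at a finite word `w`. -/
def resW (g : G) : List X → G
  | [] => g
  | x :: u => resW (σ.res g x) u

/-- A word `w` is strongly fixed by `g` if `g(w) = w` and `g|_w = 1`. -/
def SFix (g : G) (w : List X) : Prop := σ.actW g w = w ∧ σ.resW g w = 1

/-- The self-similar action is faithful: `G` acts faithfully on `X*`. -/
def Faithful : Prop := ∀ g : G, (∀ w : List X, σ.actW g w = w) → g = 1

end SelfSimilarAction

/-- The space `X* ∪ X^ω` of finite and (right-)infinite words over `X`. -/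
abbrev Words (X : Type*) := List X ⊕ (ℕ → X)

/-- Prepend a finite word to a finite or infinite word. -/
def prep {X : Type*} (w : List X) (p : Words X) : Words X :=
  match p with
  | .inl u => .inl (w ++ u)
  | .inr ω => .inr fun n => if h : n < w.length then w.get ⟨n, h⟩ else ω (n - w.length)

/-- The cylinder set of finite and infinite words starting with `w`. -/
def cyl {X : Type*} (w : List X) : Set (Words X) := {p | ∃ q, p = prep w q}

/-- The topology on `X* ∪ X^ω` generated by the cylinder sets and their complements. -/
def wordsTop (X : Type*) : TopologicalSpace (Words X) :=
  TopologicalSpace.generateFrom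
    ({s | ∃ w : List X, s = cyl w} ∪ {s | ∃ w : List X, s = (cyl w)ᶜ})

namespace SelfSimilarAction

variable {G X : Type*} [Group G] (σ : SelfSimilarAction G X)

/-- The action of `g ∈ G` on infinite words. -/
def actInf (g : G) (ω : ℕ → X) : ℕ → X :=
  fun n => σ.act (σ.resW g (List.ofFn fun i : Fin n => ω i)) (ω n)

/-- The action of `g ∈ G` on finite and infinite words. -/
def actP (g : G) (p : Words X) : Words X :=
  match p with
  | .inl u => .inl (σ.actW g u)
  | .inr ω => .inr (σ.actInf g ω)

/-- Germ equivalence for the universal groupoid of the inverse hull `S` of the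
self-similar action: `((u,g,v), ω)` represents the germ of `u g v*` at the point `vω`,
and two such quadruples are equivalent iff they have the same source point and admit a
common restriction defined at that point. -/
def germRel (a b : (List X × G × List X) × Words X) : Prop :=
  prep a.1.2.2 a.2 = prep b.1.2.2 b.2 ∧
  ∃ (r r' : List X) (q : Words X),
    a.2 = prep r q ∧ b.2 = prep r' q ∧
    a.1.2.2 ++ r = b.1.2.2 ++ r' ∧
    a.1.1 ++ σ.actW a.1.2.1 r = b.1.1 ++ σ.actW b.1.2.1 r' ∧
    σ.resW a.1.2.1 r = σ.resW b.1.2.1 r'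

/-- The arrows of the universal groupoid `G(S)`: germs `[u g v*, vω]`. -/
def Arr := Quot σ.germRel

/-- The germ of `u g v*` at the point `vω`. -/
def germ (u : List X) (g : G) (v : List X) (ω : Words X) : σ.Arr :=
  Quot.mk σ.germRel ((u, g, v), ω)

/-- The unit space of `G(S)`: the germs of idempotents `w w*`. -/
def unitSet : Set σ.Arr :=
  {a | ∃ (w : List X) (ω : Words X), a = σ.germ w 1 w ω}

/-- The isotropy subgroupoid of `G(S)`: the germs whose source equals their range. -/
def isoSet : Set σ.Arr :=
  {a | ∃ (u : List X) (g : G) (v : List X) (ω : Words X),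
        a = σ.germ u g v ω ∧ prep v ω = prep u (σ.actP g ω)}

/-- The set of germs of `u g v*` at the points of `V`. -/
def germSet (u : List X) (g : G) (v : List X) (V : Set (Words X)) : Set σ.Arr :=
  {a | ∃ ω : Words X, prep v ω ∈ V ∧ a = σ.germ u g v ω}

/-- The germ topology on the arrows of `G(S)`, generated by the basic (compact) local
bisections `(u g v*, V)` with `V` open in `X* ∪ X^ω`. -/
def arrTop : TopologicalSpace σ.Arr :=
  TopologicalSpace.generateFrom
    {s | ∃ (u : List X) (g : G) (v : List X) (V : Set (Words X)),
        (wordsTop X).IsOpen V ∧ s = σ.germSet u g v V}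

end SelfSimilarAction

/-!
Units always lie in the interior of the isotropy. Conversely, let `[u g v*, vω]` lie in an open
bisection of isotropy. Neighbourhoods of a point of `X* ∪ X^ω` are a cylinder minus finitely many
cylinders, so after restricting the germ deep enough along `ω` to `[u' g' v'*, v'q]`, the bisection
contains the germs at all finite words `v'l` with `l` avoiding finitely many first letters.
Isotropy there gives `u' = v'` and `g'(xs) = xs` for all remaining letters `x` and all `s`, which
faithfulness turns into `g'` strongly fixing `x`; so `g' = 1` under the hypothesis on `G`, and the
germ is a unit. Conversely, if `g` strongly fixes every letter outside a finite set `F`, then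
`(g, V)`, with `V` the complement of the cylinders `[x]` for `x ∈ F`, is an open bisection of
isotropy containing the germ of `g` at the empty word, which is a unit only if `g = 1`.
-/

section Words

variable {X : Type*}

theorem prep_nil (p : Words X) : prep [] p = p := by
  cases p with
  | inl u => rfl
  | inr ω => simp [prep]

theorem prep_append (s t : List X) (q : Words X) :
    prep (s ++ t) q = prep s (prep t q) := by
  cases q with
  | inl u => simp [prep]
  | inr ω =>
    simp only [prep, Sum.inr.injEq]
    funext n
    by_cases hs : n < s.length
    · simp [hs, Nat.lt_add_right, List.getElem_append_left]
    · by_cases hst : n < s.length + t.length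
      · simp [hs, hst, List.getElem_append_right (not_lt.mp hs),
          Nat.sub_lt_left_of_lt_add (not_lt.mp hs) hst]
      · simp [hs, hst, show ¬ n - s.length < t.length by omega, Nat.sub_sub]

theorem prep_cons (x : X) (s : List X) (p : Words X) : prep (x :: s) p = prep [x] (prep s p) :=
  prep_append [x] s p

theorem prep_singleton_inj {x y : X} {p p' : Words X} (h : prep [x] p = prep [y] p') :
    x = y ∧ p = p' := by
  cases p <;> cases p' <;> simp only [prep, reduceCtorEq, Sum.inl.injEq, Sum.inr.injEq] at h
  · simpa using h
  · refine ⟨by simpa using congrFun h 0, congrArg Sum.inr (funext fun n => ?_)⟩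
    simpa using congrFun h (n + 1)

theorem exists_append_of_prep_eq {s t : List X} {p p' : Words X} (h : prep s p = prep t p') :
    (∃ d, t = s ++ d ∧ p = prep d p') ∨ ∃ d, s = t ++ d ∧ p' = prep d p := by
  induction s generalizing t with
  | nil => exact Or.inl ⟨t, rfl, by rwa [prep_nil] at h⟩
  | cons x s ih =>
    cases t with
    | nil => exact Or.inr ⟨x :: s, rfl, by rw [prep_nil] at h; exact h.symm⟩
    | cons y t =>
      rw [prep_cons x s, prep_cons y t] at h
      obtain ⟨rfl, h'⟩ := prep_singleton_inj h
      rcases ih h' with ⟨d, rfl, hd⟩ | ⟨d, rfl, hd⟩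
      · exact Or.inl ⟨d, rfl, hd⟩
      · exact Or.inr ⟨d, rfl, hd⟩

theorem eq_nil_or_eq_prep_singleton (p : Words X) :
    p = .inl [] ∨ ∃ x q, p = prep [x] q := by
  rcases p with (_ | ⟨x, s⟩) | ω
  · exact Or.inl rfl
  · exact Or.inr ⟨x, .inl s, rfl⟩
  · refine Or.inr ⟨ω 0, .inr fun n => ω (n + 1), congrArg Sum.inr (funext fun n => ?_)⟩
    cases n <;> simp

theorem cyl_nil : cyl ([] : List X) = Set.univ :=
  Set.eq_univ_of_forall fun p => ⟨p, (prep_nil p).symm⟩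

theorem inl_mem_cyl {w u : List X} : (.inl u : Words X) ∈ cyl w ↔ w <+: u := by
  constructor
  · rintro ⟨_ | s, hq⟩
    · exact ⟨_, (Sum.inl.inj hq).symm⟩
    · cases hq
  · rintro ⟨d, rfl⟩
    exact ⟨.inl d, rfl⟩

theorem prep_mem_cyl_of_prefix {t v : List X} (h : t <+: v) (q : Words X) : prep v q ∈ cyl t := by
  obtain ⟨d, rfl⟩ := h
  exact ⟨prep d q, prep_append t d q⟩

theorem cyl_subset_cyl {w w' : List X} (h : w <+: w') : cyl w' ⊆ cyl w := by
  rintro _ ⟨q, rfl⟩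
  exact prep_mem_cyl_of_prefix h q

theorem isOpen_compl_cyl (w : List X) : (wordsTop X).IsOpen (cyl w)ᶜ :=
  .basic _ (.inr ⟨w, rfl⟩)

def basicOpen (w : List X) (T : Finset (List X)) : Set (Words X) :=
  cyl w ∩ ⋂ t ∈ T, (cyl t)ᶜ

theorem mem_basicOpen {p : Words X} {w : List X} {T : Finset (List X)} :
    p ∈ basicOpen w T ↔ p ∈ cyl w ∧ ∀ t ∈ T, p ∉ cyl t := by
  simp [basicOpen]

theorem basicOpen_empty (w : List X) : basicOpen w ∅ = cyl w := by
  simp [basicOpen]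

theorem basicOpen_nil_singleton (t : List X) : basicOpen [] {t} = (cyl t)ᶜ := by
  simp [basicOpen, cyl_nil]

theorem basicOpen_inter_basicOpen [DecidableEq X] {w₁ w₂ : List X} (h : w₁ <+: w₂)
    (T₁ T₂ : Finset (List X)) :
    basicOpen w₁ T₁ ∩ basicOpen w₂ T₂ = basicOpen w₂ (T₁ ∪ T₂) := by
  ext p
  simp only [Set.mem_inter_iff, mem_basicOpen, Finset.mem_union]
  constructor
  · rintro ⟨⟨-, h₁⟩, hw₂, h₂⟩
    exact ⟨hw₂, fun t ht => ht.elim (h₁ t) (h₂ t)⟩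
  · rintro ⟨hw₂, hT⟩
    exact ⟨⟨cyl_subset_cyl h hw₂, fun t ht => hT t (.inl ht)⟩, hw₂, fun t ht => hT t (.inr ht)⟩

theorem exists_basicOpen_subset_inter {p : Words X} {w₁ w₂ : List X} {T₁ T₂ : Finset (List X)}
    (hp₁ : p ∈ basicOpen w₁ T₁) (hp₂ : p ∈ basicOpen w₂ T₂) :
    ∃ w T, p ∈ basicOpen w T ∧ basicOpen w T ⊆ basicOpen w₁ T₁ ∩ basicOpen w₂ T₂ := by
  classical
  obtain ⟨q₁, hq₁⟩ := (mem_basicOpen.mp hp₁).1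
  obtain ⟨q₂, hq₂⟩ := (mem_basicOpen.mp hp₂).1
  rcases exists_append_of_prep_eq (hq₁.symm.trans hq₂) with ⟨d, rfl, -⟩ | ⟨d, rfl, -⟩
  · have e := basicOpen_inter_basicOpen (List.prefix_append w₁ d) T₁ T₂
    exact ⟨_, _, e ▸ ⟨hp₁, hp₂⟩, e.ge⟩
  · have e := basicOpen_inter_basicOpen (List.prefix_append w₂ d) T₂ T₁
    exact ⟨_, _, e ▸ ⟨hp₂, hp₁⟩, e.ge.trans (Set.inter_comm _ _).subset⟩

theorem exists_basicOpen_subset {V : Set (Words X)} (hV : (wordsTop X).IsOpen V) {p : Words X}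
    (hp : p ∈ V) : ∃ w T, p ∈ basicOpen w T ∧ basicOpen w T ⊆ V := by
  have hV' : TopologicalSpace.GenerateOpen
      ({s | ∃ w : List X, s = cyl w} ∪ {s | ∃ w : List X, s = (cyl w)ᶜ}) V := hV
  clear hV
  induction hV' generalizing p with
  | basic s hs =>
    rcases hs with ⟨w, rfl⟩ | ⟨t, rfl⟩
    · exact ⟨w, ∅, by rwa [basicOpen_empty], (basicOpen_empty w).subset⟩
    · exact ⟨[], {t}, by rwa [basicOpen_nil_singleton], (basicOpen_nil_singleton t).subset⟩
  | univ => exact ⟨[], ∅, by simp [basicOpen_empty, cyl_nil], Set.subset_univ _⟩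
  | inter s₁ s₂ _ _ ih₁ ih₂ =>
    obtain ⟨w₁, T₁, hp₁, hsub₁⟩ := ih₁ hp.1
    obtain ⟨w₂, T₂, hp₂, hsub₂⟩ := ih₂ hp.2
    obtain ⟨w, T, hp, hsub⟩ := exists_basicOpen_subset_inter hp₁ hp₂
    exact ⟨w, T, hp, hsub.trans (Set.inter_subset_inter hsub₁ hsub₂)⟩
  | sUnion S _ ih =>
    obtain ⟨s, hs, hps⟩ := hp
    obtain ⟨w, T, hpw, hsub⟩ := ih s hs hps
    exact ⟨w, T, hpw, hsub.trans (Set.subset_sUnion_of_mem hs)⟩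

theorem prep_inl_mem_basicOpen {w v : List X} {T : Finset (List X)} (hw : w <+: v)
    (hv : ∀ t ∈ T, ¬ t <+: v) {l : List X}
    (hl : ∀ x ∈ l.head?, ∀ t ∈ T, t[v.length]? ≠ some x) : prep v (.inl l) ∈ basicOpen w T := by
  refine mem_basicOpen.mpr ⟨inl_mem_cyl.mpr (hw.trans (List.prefix_append v l)),
    fun t ht htl => ?_⟩
  replace htl : t <+: v ++ l := inl_mem_cyl.mp htl
  rcases le_or_gt t.length v.length with hle | hlt
  · exact hv t ht (List.prefix_of_prefix_length_le htl (List.prefix_append v l) hle)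
  · cases l with
    | nil => simpa using hlt.trans_le htl.length_le
    | cons x s => exact hl x rfl t ht (by simp [List.getElem?_eq_getElem hlt, htl.getElem hlt])

theorem exists_prep_inl_mem_of_isOpen {V : Set (Words X)} (hV : (wordsTop X).IsOpen V)
    {v : List X} {ω : Words X} (hω : prep v ω ∈ V) :
    ∃ r q, ω = prep r q ∧ ∃ F : Set X, F.Finite ∧
      ∀ l : List X, (∀ x ∈ l.head?, x ∉ F) → prep (v ++ r) (.inl l) ∈ V := by
  obtain ⟨w, T, hmem, hsub⟩ := exists_basicOpen_subset hV hω
  obtain ⟨⟨q', hq'⟩, hT⟩ := mem_basicOpen.mp hmem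
  obtain ⟨r, q, rfl, hwr⟩ : ∃ r q, ω = prep r q ∧ w <+: v ++ r := by
    rcases exists_append_of_prep_eq hq' with ⟨d, rfl, hd⟩ | ⟨d, rfl, -⟩
    · exact ⟨d, q', hd, List.prefix_rfl⟩
    · exact ⟨[], ω, (prep_nil ω).symm, ⟨d, by simp⟩⟩
  set n := (v ++ r).length
  refine ⟨r, q, rfl, {x | ∃ t ∈ T, t[n]? = some x}, ?_,
    fun l hl => hsub (prep_inl_mem_basicOpen hwr ?_ fun x hx t ht htx => hl x hx ⟨t, ht, htx⟩)⟩
  · exact ((T.finite_toSet.image fun t => t[n]?).preimage (Option.some_injective X).injOn).subset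
      fun x ⟨t, ht, hx⟩ => ⟨t, ht, hx⟩
  · intro t ht htv
    exact hT t ht (by rw [← prep_append]; exact prep_mem_cyl_of_prefix htv q)

end Words

namespace SelfSimilarAction

variable {G X : Type*} [Group G] (σ : SelfSimilarAction G X)

theorem actW_one : ∀ u : List X, σ.actW 1 u = u
  | [] => rfl
  | x :: u => by rw [actW, σ.act_one, σ.res_one, actW_one u]

theorem resW_one : ∀ u : List X, σ.resW 1 u = 1
  | [] => rfl
  | x :: u => by rw [resW, σ.res_one, resW_one u]

theorem actW_append (g : G) (s t : List X) :
    σ.actW g (s ++ t) = σ.actW g s ++ σ.actW (σ.resW g s) t := by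
  induction s generalizing g with
  | nil => rfl
  | cons x s ih => simp [actW, resW, ih]

theorem resW_append (g : G) (s t : List X) :
    σ.resW g (s ++ t) = σ.resW (σ.resW g s) t := by
  induction s generalizing g with
  | nil => rfl
  | cons x s ih => simp [resW, ih]

theorem length_actW (g : G) (u : List X) : (σ.actW g u).length = u.length := by
  induction u generalizing g with
  | nil => rfl
  | cons x u ih => simp [actW, ih]

theorem sFix_singleton_iff {g : G} {x : X} : σ.SFix g [x] ↔ σ.act g x = x ∧ σ.res g x = 1 := by
  simp [SFix, actW, resW]

theorem actP_one (p : Words X) : σ.actP 1 p = p := by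
  cases p with
  | inl u => simp [actP, actW_one]
  | inr ω => exact congrArg Sum.inr (funext fun n => by simp [actInf, resW_one, σ.act_one])

theorem actP_prep_singleton (g : G) (x : X) (q : Words X) :
    σ.actP g (prep [x] q) = prep [σ.act g x] (σ.actP (σ.res g x) q) := by
  cases q with
  | inl u => rfl
  | inr ω =>
    refine congrArg Sum.inr (funext fun n => ?_)
    cases n <;> simp [actInf, resW, List.ofFn_succ]

theorem actP_prep (g : G) (r : List X) (q : Words X) :
    σ.actP g (prep r q) = prep (σ.actW g r) (σ.actP (σ.resW g r) q) := by
  induction r generalizing g with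
  | nil => simp [prep_nil, actW, resW]
  | cons x r ih => rw [prep_cons x r, actP_prep_singleton, ih, actW, resW, ← prep_cons]

theorem actP_prep_of_sFix {g : G} {w : List X} (h : σ.SFix g w) (q : Words X) :
    σ.actP g (prep w q) = prep w q := by
  rw [actP_prep, h.1, h.2, actP_one]

theorem Faithful.sFix_of_forall_append {σ : SelfSimilarAction G X} (hσ : σ.Faithful) {g : G}
    {w : List X} (h : ∀ s, σ.actW g (w ++ s) = w ++ s) : σ.SFix g w := by
  have key (s : List X) : σ.actW g w = w ∧ σ.actW (σ.resW g w) s = s :=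
    List.append_inj (by rw [← actW_append, h]) (σ.length_actW g w)
  exact ⟨(key []).1, hσ _ fun s => (key s).2⟩

theorem germRel_refl (a : (List X × G × List X) × Words X) : σ.germRel a a :=
  ⟨rfl, [], [], a.2, (prep_nil a.2).symm, (prep_nil a.2).symm, rfl, rfl, rfl⟩

theorem germRel_symm {a b : (List X × G × List X) × Words X} (h : σ.germRel a b) :
    σ.germRel b a := by
  obtain ⟨h₁, r, r', q, ha, hb, hv, hu, hres⟩ := h
  exact ⟨h₁.symm, r', r, q, hb, ha, hv.symm, hu.symm, hres.symm⟩

theorem germRel_trans {a b c : (List X × G × List X) × Words X}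
    (hab : σ.germRel a b) (hbc : σ.germRel b c) : σ.germRel a c := by
  obtain ⟨⟨u₁, g₁, v₁⟩, ω₁⟩ := a
  obtain ⟨⟨u₂, g₂, v₂⟩, ω₂⟩ := b
  obtain ⟨⟨u₃, g₃, v₃⟩, ω₃⟩ := c
  obtain ⟨h₁, r₁, r₁', q₁, rfl, rfl, hv, hu, hres⟩ := hab
  obtain ⟨h₁', r₂, r₂', q₂, hb, rfl, hv', hu', hres'⟩ := hbc
  refine ⟨h₁.trans h₁', ?_⟩
  rcases exists_append_of_prep_eq hb with ⟨d, rfl, rfl⟩ | ⟨d, rfl, rfl⟩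
  · refine ⟨r₁ ++ d, r₂', q₂, (prep_append _ _ _).symm, rfl, ?_, ?_, ?_⟩
    · rw [← List.append_assoc, hv, List.append_assoc, hv']
    · rw [σ.actW_append, ← List.append_assoc, hu, hres, List.append_assoc, ← σ.actW_append, hu']
    · rw [σ.resW_append, hres, ← σ.resW_append, hres']
  · refine ⟨r₁, r₂' ++ d, q₁, rfl, (prep_append _ _ _).symm, ?_, ?_, ?_⟩
    · rw [hv, ← List.append_assoc, hv', List.append_assoc]
    · rw [hu, σ.actW_append, ← List.append_assoc, hu', hres', List.append_assoc, ← σ.actW_append]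
    · rw [hres, σ.resW_append, hres', ← σ.resW_append]

theorem germRel_equivalence : Equivalence σ.germRel :=
  ⟨σ.germRel_refl, σ.germRel_symm, σ.germRel_trans⟩

theorem germ_eq_germ_iff {u v u' v' : List X} {g g' : G} {ω ω' : Words X} :
    σ.germ u g v ω = σ.germ u' g' v' ω' ↔ σ.germRel ((u, g, v), ω) ((u', g', v'), ω') :=
  Quot.eq.trans σ.germRel_equivalence.eqvGen_iff

theorem germ_prep (u : List X) (g : G) (v r : List X) (q : Words X) :
    σ.germ u g v (prep r q) = σ.germ (u ++ σ.actW g r) (σ.resW g r) (v ++ r) q :=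
  Quot.sound ⟨(prep_append v r q).symm, r, [], q, rfl, (prep_nil q).symm,
    by simp, by simp [actW], by simp [resW]⟩

theorem prep_actP_eq_of_germRel {a b : (List X × G × List X) × Words X} (h : σ.germRel a b) :
    prep a.1.1 (σ.actP a.1.2.1 a.2) = prep b.1.1 (σ.actP b.1.2.1 b.2) := by
  obtain ⟨-, r, r', q, ha, hb, -, hu, hres⟩ := h
  rw [ha, hb, σ.actP_prep, σ.actP_prep, ← prep_append, ← prep_append, hu, hres]

theorem germ_mem_isoSet_iff {u v : List X} {g : G} {ω : Words X} :
    σ.germ u g v ω ∈ σ.isoSet ↔ prep v ω = prep u (σ.actP g ω) := by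
  refine ⟨?_, fun h => ⟨u, g, v, ω, rfl, h⟩⟩
  rintro ⟨u', g', v', ω', he, h⟩
  have hr := σ.germ_eq_germ_iff.mp he
  rw [hr.1, h, σ.prep_actP_eq_of_germRel hr]

theorem germ_inl_mem_isoSet_iff {u v l : List X} {g : G} :
    σ.germ u g v (.inl l) ∈ σ.isoSet ↔ v ++ l = u ++ σ.actW g l := by
  simp [germ_mem_isoSet_iff, prep, actP]

theorem germSet_mono {u v : List X} {g : G} {V W : Set (Words X)} (h : V ⊆ W) :
    σ.germSet u g v V ⊆ σ.germSet u g v W := by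
  rintro _ ⟨ω, hω, rfl⟩
  exact ⟨ω, h hω, rfl⟩

theorem germSet_restrict_subset (u : List X) (g : G) (v r : List X) (V : Set (Words X)) :
    σ.germSet (u ++ σ.actW g r) (σ.resW g r) (v ++ r) V ⊆ σ.germSet u g v V := by
  rintro _ ⟨q, hq, rfl⟩
  exact ⟨prep r q, by rwa [← prep_append], (σ.germ_prep u g v r q).symm⟩

theorem isOpen_germSet {u v : List X} {g : G} {V : Set (Words X)} (hV : (wordsTop X).IsOpen V) :
    σ.arrTop.IsOpen (σ.germSet u g v V) :=
  .basic _ ⟨u, g, v, V, hV, rfl⟩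

theorem exists_germSet_subset {O : Set σ.Arr} (hO : σ.arrTop.IsOpen O) {a : σ.Arr} (ha : a ∈ O) :
    ∃ u g v V, (wordsTop X).IsOpen V ∧ a ∈ σ.germSet u g v V ∧ σ.germSet u g v V ⊆ O := by
  have hO' : TopologicalSpace.GenerateOpen
      {s | ∃ (u : List X) (g : G) (v : List X) (V : Set (Words X)),
        (wordsTop X).IsOpen V ∧ s = σ.germSet u g v V} O := hO
  clear hO
  induction hO' generalizing a with
  | basic s hs =>
    obtain ⟨u, g, v, V, hV, rfl⟩ := hs
    exact ⟨u, g, v, V, hV, ha, subset_rfl⟩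
  | univ =>
    obtain ⟨⟨⟨u, g, v⟩, ω⟩, rfl⟩ := Quot.exists_rep a
    exact ⟨u, g, v, Set.univ, .univ, ⟨ω, trivial, rfl⟩, Set.subset_univ _⟩
  | inter s₁ s₂ _ _ ih₁ ih₂ =>
    obtain ⟨u₁, g₁, v₁, V₁, hV₁, ⟨ω₁, hω₁, rfl⟩, hsub₁⟩ := ih₁ ha.1
    obtain ⟨u₂, g₂, v₂, V₂, hV₂, ⟨ω₂, hω₂, he⟩, hsub₂⟩ := ih₂ ha.2
    obtain ⟨h₁, r, r', q, rfl, rfl, hv, hu, hres⟩ := σ.germ_eq_germ_iff.mp he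
    refine ⟨u₁ ++ σ.actW g₁ r, σ.resW g₁ r, v₁ ++ r, V₁ ∩ V₂, .inter _ _ hV₁ hV₂,
      ⟨q, ⟨by rwa [prep_append], by rwa [prep_append, h₁]⟩, σ.germ_prep _ _ _ _ _⟩, ?_⟩
    refine Set.subset_inter ?_ ?_
    · exact (σ.germSet_mono Set.inter_subset_left).trans
        ((σ.germSet_restrict_subset _ _ _ _ _).trans hsub₁)
    · rw [hu, hres, hv]
      exact (σ.germSet_mono Set.inter_subset_right).trans
        ((σ.germSet_restrict_subset _ _ _ _ _).trans hsub₂)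
  | sUnion S _ ih =>
    obtain ⟨s, hs, has⟩ := ha
    obtain ⟨u, g, v, V, hV, hav, hsub⟩ := ih s hs has
    exact ⟨u, g, v, V, hV, hav, hsub.trans (Set.subset_sUnion_of_mem hs)⟩

theorem unitSet_subset_interior_isoSet : σ.unitSet ⊆ @interior _ σ.arrTop σ.isoSet := by
  let _ := σ.arrTop
  rintro _ ⟨w, ω, rfl⟩
  refine interior_maximal (t := σ.germSet w 1 w Set.univ) ?_
    (σ.isOpen_germSet (wordsTop X).isOpen_univ) ⟨ω, trivial, rfl⟩
  rintro _ ⟨ω', -, rfl⟩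
  exact σ.germ_mem_isoSet_iff.mpr (by rw [σ.actP_one])

theorem eq_one_of_germ_nil_mem_unitSet {g : G} (h : σ.germ [] g [] (.inl []) ∈ σ.unitSet) :
    g = 1 := by
  obtain ⟨w, ω, he⟩ := h
  obtain ⟨-, r, r', q, hr, -, -, -, hres⟩ := σ.germ_eq_germ_iff.mp he
  obtain rfl : r = [] := by
    cases q with
    | inl s => exact (List.append_eq_nil_iff.mp (Sum.inl.inj hr).symm).1
    | inr => cases hr
  simpa [resW, resW_one] using hres

theorem eq_one_of_interior_isoSet_eq_unitSet (h : @interior _ σ.arrTop σ.isoSet = σ.unitSet)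
    {g : G} (hg : {x | σ.SFix g [x]}ᶜ.Finite) : g = 1 := by
  let _ := wordsTop X
  let _ := σ.arrTop
  set V : Set (Words X) := ⋂ x ∈ {x | σ.SFix g [x]}ᶜ, (cyl [x])ᶜ
  have hV : IsOpen V := hg.isOpen_biInter fun x _ => isOpen_compl_cyl [x]
  have hsub : σ.germSet [] g [] V ⊆ σ.isoSet := by
    rintro _ ⟨p, hp, rfl⟩
    refine σ.germ_mem_isoSet_iff.mpr ?_
    simp only [prep_nil] at hp ⊢
    rcases eq_nil_or_eq_prep_singleton p with rfl | ⟨x, q, rfl⟩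
    · rfl
    · have hx : σ.SFix g [x] := not_not.mp fun hx => Set.mem_iInter₂.mp hp x hx ⟨q, rfl⟩
      exact (σ.actP_prep_of_sFix hx q).symm
  have hnil : prep [] (.inl []) ∈ V :=
    Set.mem_iInter₂.mpr fun x _ hx => by simpa using inl_mem_cyl.mp hx
  refine σ.eq_one_of_germ_nil_mem_unitSet ?_
  rw [← h]
  exact interior_maximal hsub (σ.isOpen_germSet hV) ⟨_, hnil, rfl⟩

theorem germ_mem_unitSet_of_germSet_subset_isoSet (hσ : σ.Faithful)
    (H : ∀ g : G, {x | σ.SFix g [x]}ᶜ.Finite → g = 1) {u v : List X} {g : G}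
    {V : Set (Words X)} (hV : (wordsTop X).IsOpen V) (hsub : σ.germSet u g v V ⊆ σ.isoSet)
    {ω : Words X} (hω : prep v ω ∈ V) : σ.germ u g v ω ∈ σ.unitSet := by
  obtain ⟨r, q, rfl, F, hF, hVF⟩ := exists_prep_inl_mem_of_isOpen hV hω
  have hiso (l : List X) (hl : ∀ x ∈ l.head?, x ∉ F) :
      v ++ r ++ l = u ++ σ.actW g r ++ σ.actW (σ.resW g r) l :=
    σ.germ_inl_mem_isoSet_iff.mp
      ((σ.germSet_restrict_subset u g v r V).trans hsub ⟨.inl l, hVF l hl, rfl⟩)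
  have huv : u ++ σ.actW g r = v ++ r := by simpa [actW] using (hiso [] (by simp)).symm
  have hfix (x : X) (hx : x ∉ F) : σ.SFix (σ.resW g r) [x] :=
    hσ.sFix_of_forall_append fun s =>
      (List.append_cancel_left (huv ▸ hiso (x :: s) (by simpa using hx))).symm
  have hg : σ.resW g r = 1 := H _ (hF.subset fun x hx => not_not.mp fun h => hx (hfix x h))
  rw [σ.germ_prep, hg, huv]
  exact ⟨v ++ r, q, rfl⟩

theorem interior_isoSet_subset_unitSet (hσ : σ.Faithful)
    (H : ∀ g : G, {x | σ.SFix g [x]}ᶜ.Finite → g = 1) :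
    @interior _ σ.arrTop σ.isoSet ⊆ σ.unitSet := by
  let _ := σ.arrTop
  intro a ha
  obtain ⟨O, hOsub, hO, haO⟩ := mem_interior.mp ha
  obtain ⟨u, g, v, V, hV, ⟨ω, hω, rfl⟩, hsub⟩ := σ.exists_germSet_subset hO haO
  exact σ.germ_mem_unitSet_of_germSet_subset_isoSet hσ H hV (hsub.trans hOsub) hω

end SelfSimilarAction

open SelfSimilarAction in
theorem stmt18_general {G X : Type*} [Group G]
    (σ : SelfSimilarAction G X) (hfaith : σ.Faithful) :
    @interior _ σ.arrTop σ.isoSet = σ.unitSet ↔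
      ∀ g : G, ({x : X | σ.act g x = x ∧ σ.res g x = 1}ᶜ).Finite → g = 1 := by
  simp only [← σ.sFix_singleton_iff]
  exact ⟨fun h _ hg => σ.eq_one_of_interior_isoSet_eq_unitSet h hg,
    fun H => (σ.interior_isoSet_subset_unitSet hfaith H).antisymm σ.unitSet_subset_interior_isoSet⟩

open SelfSimilarAction in
/-- For a faithful self-similar action of a group `G` on `X*` with `X` infinite, the
universal groupoid of the associated inverse hull is effective (the interior of its
isotropy subgroupoid equals its unit space) iff the only element of `G` strongly fixing
a cofinite set of letters of `X` is the identity. -/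
theorem stmt18 {G X : Type*} [Group G] [Infinite X]
    (σ : SelfSimilarAction G X) (hfaith : σ.Faithful) :
    @interior _ σ.arrTop σ.isoSet = σ.unitSet ↔
      ∀ g : G, ({x : X | σ.act g x = x ∧ σ.res g x = 1}ᶜ).Finite → g = 1 :=
  stmt18_general σ hfaith
end
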